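/- arXiv:2312.02879 — 3 statements merged into one kernel-verified Lean document; each statement's English description precedes it below -/
import Mathlib

section
/- Let H be a 3-uniform hypergraph satisfying condition (♠). Then every subhypergraph H' of H (with at least two vertices) has minimum codegree δ_co(H') ≤ 1. -/
open Filter

/-- A 3-uniform hypergraph on vertex type `V`: a set of edges, each of size 3. -/
structure H3 (V : Type) [DecidableEq V] where
  edges : Finset (Finset V)
  card3 : ∀ e ∈ edges, e.card = 3

namespace H3

variable {V W : Type} [DecidableEq V] [DecidableEq W]

/-- `H` contains a copy of `F`: an injection of vertices mapping edges to edges. -/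
def contains (H : H3 V) (F : H3 W) : Prop :=
  ∃ f : W → V, Function.Injective f ∧ ∀ e ∈ F.edges, e.image f ∈ H.edges

/-- `H` is `F`-free. -/
def free (H : H3 V) (F : H3 W) : Prop := ¬ H.contains F

/-- The codegree of a pair of vertices: the number of edges containing both. -/
def codeg (H : H3 V) (u v : V) : ℕ :=
  (H.edges.filter fun e => u ∈ e ∧ v ∈ e).card

/-- The minimum codegree: the minimum of `codeg` over pairs of distinct vertices. -/
noncomputable def minCodeg [Fintype V] (H : H3 V) : ℕ :=
  sInf {d | ∃ u v : V, u ≠ v ∧ H.codeg u v = d}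

/-- `H` is uniformly `(d, η)`-dense: every vertex subset `U` spans at least
`d * C(|U|,3) - η * n^3` edges. -/
def uniformlyDense [Fintype V] (H : H3 V) (d η : ℝ) : Prop :=
  ∀ U : Finset V,
    d * (U.card.choose 3 : ℝ) - η * (Fintype.card V : ℝ) ^ 3
      ≤ ((H.edges.filter fun e => e ⊆ U).card : ℝ)

end H3

/-- The uniform Turán density `π_⋅(F)`. -/
noncomputable def uniformTuranDensity {W : Type} [DecidableEq W] (F : H3 W) : ℝ :=
  sSup {d : ℝ | 0 ≤ d ∧ d ≤ 1 ∧
    ∀ η : ℝ, 0 < η → ∀ n₀ : ℕ, ∃ n, n₀ ≤ n ∧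
      ∃ H : H3 (Fin n), H.free F ∧ H.uniformlyDense d η}

/-- The codegree Turán number `ex_co(n, F)`: the maximum minimum codegree of an
`n`-vertex `F`-free 3-graph. -/
noncomputable def exCodeg {W : Type} [DecidableEq W] (n : ℕ) (F : H3 W) : ℕ :=
  sSup {d | ∃ H : H3 (Fin n), H.free F ∧ H.minCodeg = d}

/-- The codegree Turán density `π_co(F) = lim_n ex_co(n,F)/n` (the limit exists,
so it coincides with the limsup). -/
noncomputable def codegTuranDensity {W : Type} [DecidableEq W] (F : H3 W) : ℝ :=
  Filter.limsup (fun n : ℕ => (exCodeg n F : ℝ) / n) Filter.atTop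

/-- Condition (♠): there is an enumeration of the vertices and a 3-colouring
`φ` of pairs (colours `0 = red`, `1 = blue`, `2 = green`) such that every edge
`{a,b,c}` with `σ a < σ b < σ c` satisfies `φ a b = red`, `φ a c = blue`,
`φ b c = green`. -/
def Spade {V : Type} [DecidableEq V] [Fintype V] (H : H3 V) : Prop :=
  ∃ σ : V ≃ Fin (Fintype.card V), ∃ φ : V → V → Fin 3,
    (∀ u v : V, φ u v = φ v u) ∧
    ∀ a b c : V, ({a, b, c} : Finset V) ∈ H.edges → σ a < σ b → σ b < σ c →
      φ a b = 0 ∧ φ a c = 1 ∧ φ b c = 2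


/-- Extract the third vertex of a 3-edge containing two given distinct vertices. -/
lemma third_vertex {V : Type} [DecidableEq V] (e : Finset V) (he : e.card = 3) {x y : V}
    (hx : x ∈ e) (hy : y ∈ e) (hxy : x ≠ y) :
    ∃ z, z ≠ x ∧ z ≠ y ∧ e = {z, x, y} := by
  have hsub : ({x, y} : Finset V) ⊆ e := by
    intro a ha
    simp only [Finset.mem_insert, Finset.mem_singleton] at ha
    rcases ha with h | h <;> subst h <;> assumption
  have hcard : (e \ {x, y}).card = 1 := by
    rw [Finset.card_sdiff_of_subset hsub, Finset.card_pair hxy, he]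
  obtain ⟨z, hz⟩ := Finset.card_eq_one.mp hcard
  have hzmem : z ∈ e \ ({x, y} : Finset V) := by rw [hz]; simp
  simp only [Finset.mem_sdiff, Finset.mem_insert, Finset.mem_singleton, not_or] at hzmem
  refine ⟨z, hzmem.2.1, hzmem.2.2, ?_⟩
  refine (Finset.eq_of_subset_of_card_le ?_ ?_).symm
  · intro a ha
    simp only [Finset.mem_insert, Finset.mem_singleton] at ha
    rcases ha with h | h | h <;> subst h
    exacts [hzmem.1, hx, hy]
  · rw [he]
    have : ({z, x, y} : Finset V).card = 3 := by
      rw [Finset.card_insert_of_notMem, Finset.card_pair hxy]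
      simp [hzmem.2.1, hzmem.2.2]
    omega

/-- If `H` satisfies condition (♠), then every subhypergraph `H'` of `H`, with
vertex set `S` of size at least two, has minimum codegree at most 1. -/
theorem stmt2 {V : Type} [DecidableEq V] [Fintype V] (H : H3 V) (hH : Spade H)
    (S : Finset V) (hS : 2 ≤ S.card) (H' : H3 V)
    (hsub : H'.edges ⊆ H.edges) (hin : ∀ e ∈ H'.edges, e ⊆ S) :
    sInf {d | ∃ u ∈ S, ∃ v ∈ S, u ≠ v ∧ H'.codeg u v = d} ≤ 1 := by
  obtain ⟨σ, φ, hφsymm, hφ⟩ := hH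
  -- pick v maximizing σ on S, then u maximizing σ on S.erase v
  have hSne : S.Nonempty := Finset.card_pos.mp (by omega)
  obtain ⟨v, hvS, hvmax⟩ := S.exists_max_image (fun x => σ x) hSne
  have hSvne : (S.erase v).Nonempty := by
    rw [← Finset.card_pos, Finset.card_erase_of_mem hvS]; omega
  obtain ⟨u, huSv, humax⟩ := (S.erase v).exists_max_image (fun x => σ x) hSvne
  have huS : u ∈ S := Finset.mem_of_mem_erase huSv
  have huv : u ≠ v := Finset.ne_of_mem_erase huSv
  have hσuv : σ u < σ v :=
    lt_of_le_of_ne (hvmax u huS) (fun h => huv (σ.injective h))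
  by_cases h0 : H'.codeg u v = 0
  · calc sInf {d | ∃ u ∈ S, ∃ v ∈ S, u ≠ v ∧ H'.codeg u v = d}
        ≤ H'.codeg u v := Nat.sInf_le ⟨u, huS, v, hvS, huv, rfl⟩
      _ ≤ 1 := by omega
  · -- there is an edge e ∋ u, v
    have : (H'.edges.filter fun e => u ∈ e ∧ v ∈ e).Nonempty := by
      rw [← Finset.card_pos]
      have : H'.codeg u v ≠ 0 := h0
      unfold H3.codeg at this
      omega
    obtain ⟨e, he⟩ := this
    rw [Finset.mem_filter] at he
    obtain ⟨heH', hue, hve⟩ := he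
    obtain ⟨w, hwu, hwv, hew⟩ := third_vertex e (H'.card3 e heH') hue hve huv
    have hwS : w ∈ S := hin e heH' (by rw [hew]; simp)
    have hwSv : w ∈ S.erase v := Finset.mem_erase.mpr ⟨hwv, hwS⟩
    have hσwu : σ w < σ u :=
      lt_of_le_of_ne (humax w hwSv) (fun h => hwu (σ.injective h))
    -- spade condition on edge {w, u, v}
    have heH : ({w, u, v} : Finset V) ∈ H.edges := by
      rw [← hew]; exact hsub heH'
    obtain ⟨hwu0, hwv1, huv2⟩ := hφ w u v heH hσwu hσuv
    -- show codeg w u ≤ 1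
    have hkey : (H'.edges.filter fun e' => w ∈ e' ∧ u ∈ e') ⊆ {e} := by
      intro e' he'
      rw [Finset.mem_filter] at he'
      obtain ⟨he'H', hwe', hue'⟩ := he'
      obtain ⟨z, hzw, hzu, hez⟩ := third_vertex e' (H'.card3 e' he'H') hwe' hue' hwu
      have hzS : z ∈ S := hin e' he'H' (by rw [hez]; simp)
      have hσzw : σ z ≠ σ w := fun h => hzw (σ.injective h)
      have hσzu : σ z ≠ σ u := fun h => hzu (σ.injective h)
      rcases lt_trichotomy (σ z) (σ w) with h1 | h1 | h1
      · -- edge {z, w, u}: φ w u = 2, contradiction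
        have hmem : ({z, w, u} : Finset V) ∈ H.edges := by
          have : ({z, w, u} : Finset V) = e' := hez.symm
          rw [this]; exact hsub he'H'
        obtain ⟨_, _, h2⟩ := hφ z w u hmem h1 hσwu
        rw [hwu0] at h2
        exact absurd h2 (by decide)
      · exact absurd h1 hσzw
      · rcases lt_trichotomy (σ z) (σ u) with h2 | h2 | h2
        · -- edge {w, z, u}: φ w u = 1, contradiction
          have hmem : ({w, z, u} : Finset V) ∈ H.edges := by
            have : ({w, z, u} : Finset V) = e' := by
              rw [hez]; ext t; simp only [Finset.mem_insert, Finset.mem_singleton]; tauto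
            rw [this]; exact hsub he'H'
          obtain ⟨_, h3, _⟩ := hφ w z u hmem h1 h2
          rw [hwu0] at h3
          exact absurd h3 (by decide)
        · exact absurd h2 hσzu
        · -- σ u < σ z, so z = v, hence e' = e
          have hzv : z = v := by
            by_contra hzv
            have : z ∈ S.erase v := Finset.mem_erase.mpr ⟨hzv, hzS⟩
            exact absurd (humax z this) (not_le.mpr h2)
          rw [Finset.mem_singleton, hez, hew, hzv]
          ext t; simp only [Finset.mem_insert, Finset.mem_singleton]; tauto
    have hfin : H'.codeg w u ≤ 1 := by
      unfold H3.codeg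
      calc (H'.edges.filter fun e' => w ∈ e' ∧ u ∈ e').card
          ≤ ({e} : Finset (Finset V)).card := Finset.card_le_card hkey
        _ = 1 := Finset.card_singleton e
    calc sInf {d | ∃ u ∈ S, ∃ v ∈ S, u ≠ v ∧ H'.codeg u v = d}
        ≤ H'.codeg w u := Nat.sInf_le ⟨w, hwS, u, huS, hwu, rfl⟩
      _ ≤ 1 := hfin
end

section
/- Let d > 0 and let m be a positive integer with (m − 1)·d < π/2. Let P be a set of at most m points on the unit circle, and let G be a connected graph with vertex set P such that for every edge of G its two endpoints have arc-distance at most d on the circle. Then all points of P lie on an open half circle, i.e., on an open arc of length π. -/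
open Real

/-- Let `d > 0` and let `m ≥ 1` with `(m-1)·d < π/2`. Let `P` be a set of at
most `m` points on the unit circle (modelled as `ℝ/2πℤ`, where the distance of
two points is their arc-distance), and let `G` be a connected graph on `P`
whose every edge joins two points of arc-distance at most `d`. Then all points
of `P` lie on an open half circle, i.e. there is a point `c` such that every
point of `P` is at arc-distance less than `π/2` from `c`. -/
theorem stmt11 (d : ℝ) (hd : 0 < d) (m : ℕ) (hm : 0 < m)
    (hmd : ((m : ℝ) - 1) * d < π / 2)
    (P : Finset (AddCircle (2 * π))) (hP : P.card ≤ m)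
    (G : SimpleGraph {x : AddCircle (2 * π) // x ∈ P}) (hconn : G.Connected)
    (hedge : ∀ u v : {x : AddCircle (2 * π) // x ∈ P}, G.Adj u v →
      dist (u : AddCircle (2 * π)) (v : AddCircle (2 * π)) ≤ d) :
    ∃ c : AddCircle (2 * π), ∀ p ∈ P, dist p c < π / 2 := by
  have hne : P.Nonempty := by
    obtain ⟨⟨v, hv⟩⟩ := hconn.nonempty
    exact ⟨v, hv⟩
  obtain ⟨c, hc⟩ := hne
  refine ⟨c, ?_⟩
  intro p hp
  obtain ⟨w⟩ := hconn ⟨p, hp⟩ ⟨c, hc⟩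
  have key : ∀ {u v : {x : AddCircle (2 * π) // x ∈ P}} (q : G.Walk u v),
      dist (u : AddCircle (2 * π)) (v : AddCircle (2 * π)) ≤ q.length * d := by
    intro u v q
    induction q with
    | nil => simp
    | @cons a b v h q ih =>
      have h1 : dist (a : AddCircle (2 * π)) (v : AddCircle (2 * π)) ≤
          dist (a : AddCircle (2 * π)) (b : AddCircle (2 * π)) +
          dist (b : AddCircle (2 * π)) (v : AddCircle (2 * π)) := dist_triangle _ _ _
      have h2 := hedge a b h
      have : ((q.cons h).length : ℝ) * d = d + q.length * d := by
        simp [SimpleGraph.Walk.length_cons]; ring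
      rw [this]
      linarith
  have hb := key w.bypass
  have hlen : w.bypass.length < Fintype.card {x : AddCircle (2 * π) // x ∈ P} :=
    w.bypass_isPath.length_lt
  have hcard : Fintype.card {x : AddCircle (2 * π) // x ∈ P} = P.card :=
    Fintype.card_coe P
  have hlen2 : w.bypass.length + 1 ≤ m := by omega
  have hlenR : (w.bypass.length : ℝ) ≤ (m : ℝ) - 1 := by
    have : ((w.bypass.length + 1 : ℕ) : ℝ) ≤ (m : ℝ) := by exact_mod_cast hlen2
    push_cast at this
    linarith
  have : dist (p : AddCircle (2 * π)) (c : AddCircle (2 * π)) ≤ ((m : ℝ) - 1) * d :=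
    le_trans hb (by nlinarith)
  linarith
end

section
/- Let q, r be positive integers and n = qr + 1, with vertices a₀,…,a_{n−1} and indices taken modulo n. For 0 ≤ i ≤ n−1 and 0 ≤ j ≤ r−1 let S_{ij} = {a_{i+t} : jq+1 ≤ t ≤ (j+1)q}. Let X₀,…,X_{n−1} be independent random variables, each uniform on {0,1,…,r−1}, and let G be the random graph on {a₀,…,a_{n−1}} in which, for 0 ≤ i < j ≤ n−1, a_i a_j is an edge if and only if a_i ∈ S_{j X_j} and a_j ∈ S_{i X_i}. Then for every vertex a_i, the degree of a_i in G has the binomial distribution Bin(q, 1/r); in particular E[d_G(a_i)] = q/r. -/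
/-! For `j ≠ i` the vertex `a_i` lies in `S_{j X_j}` for exactly one value of `X_j`, and
`a_j ∈ S_{i X_i}` already forces `j ≠ i`. So, given `X_i = v`, the degree of `a_i` counts the `j`
in the `q`-set `S_{iv} ∌ a_i` for which `X_j` takes one prescribed value: `q` independent events
of probability `1/r`. The expectation is double counting: each of the `qr` vertices `a_j ≠ a_i`
is adjacent to `a_i` for exactly `r^{n-2}` of the `r^n` outcomes. -/

/-- The arc `S_{ij} = {a_{i+t} : jq + 1 ≤ t ≤ (j+1)q}` of vertices, where the
vertices are `Fin (qr + 1)` (that is, `a_ℓ = ℓ`) and indices are taken modulo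
`n = qr + 1`. -/
def Sij (q r : ℕ) (i : Fin (q * r + 1)) (j : ℕ) : Finset (Fin (q * r + 1)) :=
  (Finset.Icc (j * q + 1) ((j + 1) * q)).image fun t : ℕ => i + Fin.ofNat (q * r + 1) t

/-- The degree of the vertex `a_i` in the random graph `G` determined by the
outcome `X` of the random variables: the number of vertices `a_j ≠ a_i` with
`a_i ∈ S_{j X_j}` and `a_j ∈ S_{i X_i}`. -/
def degRG (q r : ℕ) (i : Fin (q * r + 1)) (X : Fin (q * r + 1) → Fin r) : ℕ :=
  (Finset.univ.filter fun j : Fin (q * r + 1) =>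
    j ≠ i ∧ i ∈ Sij q r j ((X j : ℕ)) ∧ j ∈ Sij q r i ((X i : ℕ))).card

open Finset

section
variable {α β : Type*} [Fintype α] [DecidableEq α] [Fintype β] [DecidableEq β]

lemma card_filter_apply_eq_and_filter_eq {S T : Finset α} {i : α} (hi : i ∉ S) (hTS : T ⊆ S)
    (v : β) (c : α → β) :
    #{X : α → β | X i = v ∧ {j ∈ S | X j = c j} = T}
      = (Fintype.card β - 1) ^ (#S - #T) * Fintype.card β ^ (Fintype.card α - #S - 1) := by
  set B : α → Finset β := fun k =>
    if k = i then {v} else if k ∈ T then {c k} else if k ∈ S then {c k}ᶜ else univ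
  have hB :
      ({X : α → β | X i = v ∧ {j ∈ S | X j = c j} = T} : Finset _) = Fintype.piFinset B := by
    ext X
    simp only [mem_filter, mem_univ, true_and, Fintype.mem_piFinset, B, Finset.ext_iff]
    constructor
    · rintro ⟨rfl, hX⟩ k
      split_ifs <;> grind [mem_compl]
    · intro hX
      refine ⟨by simpa using hX i, fun k => ?_⟩
      have := hX k
      split_ifs at this <;> grind [mem_compl]
  have hcard (k : α) : #(B k) = (if k ∈ S \ T then Fintype.card β - 1 else 1) *
      (if k ∈ (insert i S)ᶜ then Fintype.card β else 1) := by
    by_cases hki : k = i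
    · subst hki; simp [B, hi, show k ∉ T from fun h => hi (hTS h)]
    by_cases hkT : k ∈ T
    · simp [B, hki, hkT, hTS hkT]
    by_cases hkS : k ∈ S <;> simp [B, hki, hkT, hkS, card_compl]
  rw [hB, Fintype.card_piFinset, prod_congr rfl fun k _ => hcard k, prod_mul_distrib,
    Fintype.prod_ite_mem, Fintype.prod_ite_mem, prod_const, prod_const,
    card_sdiff_of_subset hTS, card_compl, card_insert_of_notMem hi, Nat.sub_add_eq]

lemma card_filter_apply_eq_and_card_filter_eq {S : Finset α} {i : α} (hi : i ∉ S) (v : β)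
    (c : α → β) (s : ℕ) :
    #{X : α → β | X i = v ∧ #{j ∈ S | X j = c j} = s}
      = (#S).choose s *
          ((Fintype.card β - 1) ^ (#S - s) * Fintype.card β ^ (Fintype.card α - #S - 1)) := by
  have hmaps : Set.MapsTo (fun X : α → β => {j ∈ S | X j = c j})
      ({X : α → β | X i = v ∧ #{j ∈ S | X j = c j} = s} : Finset _) (S.powersetCard s) := by
    intro X hX
    simp_all [mem_powersetCard, filter_subset]
  rw [card_eq_sum_card_fiberwise hmaps, ← card_powersetCard s S, ← smul_eq_mul, ← sum_const]
  refine sum_congr rfl fun T hT => ?_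
  obtain ⟨hTS, rfl⟩ := mem_powersetCard.1 hT
  rw [filter_filter, ← card_filter_apply_eq_and_filter_eq hi hTS v c]
  congr 1
  ext X
  simp only [mem_filter, mem_univ, true_and]
  grind

lemma card_filter_apply_eq_and_apply_eq {i j : α} (hij : i ≠ j) (v w : β) :
    #{X : α → β | X i = v ∧ X j = w} = Fintype.card β ^ (Fintype.card α - 2) := by
  have h := card_filter_apply_eq_and_card_filter_eq (notMem_singleton.2 hij) v (fun _ => w) 1
  simp only [card_singleton, Nat.choose_self, Nat.sub_self, pow_zero, one_mul, Nat.sub_sub] at h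
  rw [← h]
  congr 1
  ext X
  simp only [mem_filter, mem_univ, true_and, filter_singleton]
  split_ifs <;> simp_all
end

section
variable {q r : ℕ}

lemma val_ofNat_of_le_succ_mul {m t : ℕ} (hm : m < r) (ht : t ≤ (m + 1) * q) :
    (Fin.ofNat (q * r + 1) t : ℕ) = t := by
  have : (m + 1) * q ≤ q * r := by rw [mul_comm q]; exact Nat.mul_le_mul_right q hm
  rw [Fin.val_ofNat, Nat.mod_eq_of_lt (by omega)]

lemma mem_Sij_iff_val_sub_mem_Icc {m : ℕ} (hm : m < r) {k x : Fin (q * r + 1)} :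
    x ∈ Sij q r k m ↔ (x - k).val ∈ Icc (m * q + 1) ((m + 1) * q) := by
  simp only [Sij, mem_image]
  constructor
  · rintro ⟨t, ht, rfl⟩
    rwa [add_sub_cancel_left, val_ofNat_of_le_succ_mul hm (mem_Icc.1 ht).2]
  · exact fun h => ⟨_, h, by rw [Fin.ofNat_val_eq_self, add_sub_cancel]⟩

lemma card_Sij {m : ℕ} (hm : m < r) (k : Fin (q * r + 1)) : #(Sij q r k m) = q := by
  rw [Sij, card_image_of_injOn, Nat.card_Icc, add_mul, one_mul, Nat.add_sub_add_right,
    Nat.add_sub_cancel_left]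
  intro t ht t' ht' h
  rw [← val_ofNat_of_le_succ_mul hm (mem_Icc.1 ht).2,
    ← val_ofNat_of_le_succ_mul hm (mem_Icc.1 ht').2, add_left_cancel h]

lemma arcIndex_lt (hq : 0 < q) (hr : 0 < r) (k x : Fin (q * r + 1)) :
    ((x - k).val - 1) / q < r :=
  Nat.div_lt_of_lt_mul (by have := (x - k).isLt; have := Nat.mul_pos hq hr; omega)

def arcIndex (hq : 0 < q) (hr : 0 < r) (k x : Fin (q * r + 1)) : Fin r :=
  ⟨((x - k).val - 1) / q, arcIndex_lt hq hr k x⟩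

lemma mem_Sij_iff (hq : 0 < q) (hr : 0 < r) {k x : Fin (q * r + 1)} {m : Fin r} :
    x ∈ Sij q r k m ↔ x ≠ k ∧ arcIndex hq hr k x = m := by
  rw [mem_Sij_iff_val_sub_mem_Icc m.isLt, ← sub_ne_zero, ← Fin.val_ne_zero_iff, Fin.ext_iff,
    arcIndex, mem_Icc, Nat.div_eq_iff hq, add_one_mul]
  omega

lemma mem_Sij_and_mem_Sij_iff (hq : 0 < q) (hr : 0 < r) {i j : Fin (q * r + 1)} (hji : j ≠ i)
    (X : Fin (q * r + 1) → Fin r) :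
    i ∈ Sij q r j (X j) ∧ j ∈ Sij q r i (X i) ↔
      X j = arcIndex hq hr j i ∧ X i = arcIndex hq hr i j := by
  rw [mem_Sij_iff hq hr, mem_Sij_iff hq hr]
  simp only [hji, hji.symm, ne_eq, not_false_eq_true, true_and, eq_comm]

lemma degRG_eq_card_filter (hq : 0 < q) (hr : 0 < r) (i : Fin (q * r + 1))
    (X : Fin (q * r + 1) → Fin r) :
    degRG q r i X = #{j ∈ Sij q r i (X i) | X j = arcIndex hq hr j i} := by
  rw [degRG]
  congr 1
  ext j
  simp only [mem_filter, mem_univ, true_and]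
  constructor
  · rintro ⟨hji, hedge⟩
    exact ⟨hedge.2, ((mem_Sij_and_mem_Sij_iff hq hr hji X).1 hedge).1⟩
  · rintro ⟨hj, hXj⟩
    obtain ⟨hji, hXi⟩ := (mem_Sij_iff hq hr).1 hj
    exact ⟨hji, (mem_Sij_and_mem_Sij_iff hq hr hji X).2 ⟨hXj, hXi.symm⟩⟩

lemma card_degRG_eq (hq : 0 < q) (hr : 0 < r) (i : Fin (q * r + 1)) (s : ℕ) :
    #{X : Fin (q * r + 1) → Fin r | degRG q r i X = s}
      = r * (q.choose s * ((r - 1) ^ (q - s) * r ^ (q * r - q))) := by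
  have hfiber (v : Fin r) : #{X ∈ {X : Fin (q * r + 1) → Fin r | degRG q r i X = s} | X i = v}
      = q.choose s * ((r - 1) ^ (q - s) * r ^ (q * r - q)) := by
    have hi : i ∉ Sij q r i v := fun h => ((mem_Sij_iff hq hr).1 h).1 rfl
    have h := card_filter_apply_eq_and_card_filter_eq hi v (fun j => arcIndex hq hr j i) s
    rw [card_Sij v.isLt, Fintype.card_fin, Fintype.card_fin, Nat.sub_sub,
      Nat.add_sub_add_right] at h
    rw [filter_filter, ← h]
    congr 1
    ext X
    simp only [mem_filter, mem_univ, true_and, degRG_eq_card_filter hq hr]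
    grind
  rw [card_eq_sum_card_fiberwise (f := fun X => X i) (t := univ) (by simp),
    sum_congr rfl fun v _ => hfiber v, sum_const, card_univ, Fintype.card_fin, smul_eq_mul]

lemma sum_degRG (hq : 0 < q) (hr : 0 < r) (i : Fin (q * r + 1)) :
    ∑ X : Fin (q * r + 1) → Fin r, degRG q r i X = q * r * r ^ (q * r - 1) := by
  have hpair {j : Fin (q * r + 1)} (hji : j ≠ i) :
      #{X : Fin (q * r + 1) → Fin r | j ≠ i ∧ i ∈ Sij q r j (X j) ∧ j ∈ Sij q r i (X i)}
        = r ^ (q * r - 1) := by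
    simp_rw [Ne, hji, not_false_eq_true, true_and, mem_Sij_and_mem_Sij_iff hq hr hji]
    rw [card_filter_apply_eq_and_apply_eq hji, Fintype.card_fin, Fintype.card_fin]
    rfl
  calc ∑ X, degRG q r i X
      = ∑ j, #{X : Fin (q * r + 1) → Fin r |
          j ≠ i ∧ i ∈ Sij q r j (X j) ∧ j ∈ Sij q r i (X i)} := by
        simp only [degRG, card_filter]
        exact sum_comm
    _ = ∑ j ∈ univ.erase i, r ^ (q * r - 1) := by
        rw [← sum_erase_add _ _ (mem_univ i), filter_false_of_mem (by simp), card_empty, add_zero]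
        exact sum_congr rfl fun j hj => hpair (ne_of_mem_erase hj)
    _ = q * r * r ^ (q * r - 1) := by simp
end

/-- In the random graph `G` on `n = qr + 1` vertices determined by independent
uniform random variables `X₀, …, X_{n-1}` with values in `{0, …, r-1}` — where
for `i < j` the pair `a_i a_j` is an edge iff `a_i ∈ S_{j X_j}` and
`a_j ∈ S_{i X_i}` — the degree of each vertex `a_i` has the binomial
distribution `Bin(q, 1/r)` (probabilities computed with respect to the uniform
measure on the sample space `Fin n → Fin r` of outcomes of the `Xᵢ`); in
particular its expectation is `q/r`. -/
theorem stmt14 (q r : ℕ) (hq : 0 < q) (hr : 0 < r) (i : Fin (q * r + 1)) :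
    (∀ s : ℕ, s ≤ q →
      ((Finset.univ.filter fun X : Fin (q * r + 1) → Fin r => degRG q r i X = s).card : ℝ)
        / (Fintype.card (Fin (q * r + 1) → Fin r) : ℝ)
      = (q.choose s : ℝ) * (1 / (r : ℝ)) ^ s * (1 - 1 / (r : ℝ)) ^ (q - s)) ∧
    (∑ X : Fin (q * r + 1) → Fin r, (degRG q r i X : ℝ))
        / (Fintype.card (Fin (q * r + 1) → Fin r) : ℝ)
      = (q : ℝ) / (r : ℝ) := by
  have hcard : Fintype.card (Fin (q * r + 1) → Fin r) = r ^ (q * r + 1) := by simp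
  have hr' : (r : ℝ) ≠ 0 := by positivity
  have hqr : q ≤ q * r := Nat.le_mul_of_pos_right q hr
  refine ⟨fun s hs => ?_, ?_⟩
  · rw [card_degRG_eq hq hr, hcard, show q * r + 1 = 1 + (q * r - q) + s + (q - s) by omega]
    push_cast [Nat.cast_sub hr]
    rw [one_sub_div hr', div_pow, div_pow, one_pow, pow_add, pow_add, pow_add]
    field_simp
  · rw [← Nat.cast_sum, sum_degRG hq hr, hcard, show q * r + 1 = q * r - 1 + 1 + 1 by
      have := Nat.mul_pos hq hr; omega]
    push_cast
    field_simp
    ring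
end
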